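/- arXiv:math/0110190 — 4 statements merged into one kernel-verified Lean document; each statement's English description precedes it below -/
import Mathlib

section
/- For a partition λ of n, the modified Kostka polynomial K_λ(q) := (1-q)(1-q²)⋯(1-qⁿ) / ∏_{u∈λ}(1-q^{h_λ(u)}) (where h_λ(u) is the hook length of the box u in the Young diagram of λ) is a polynomial in q with integer coefficients and constant term equal to 1. -/
def hookLength (μ : YoungDiagram) (c : ℕ × ℕ) : ℕ :=
  (μ.rowLen c.1 - c.2) + (μ.colLen c.2 - c.1) - 1

/-!
Since `1 - X ^ m = -∏_{d ∣ m} Φ_d`, the quotient is, up to sign, a product of cyclotomic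
polynomials as soon as, for every `d > 0`, at most `⌊n / d⌋` hook lengths of `μ` are divisible
by `d`.

To count these hooks, encode a diagram with `k` rows by its beta-set `B = {μ_i + k - 1 - i}`.
The hooks of `μ` inject into the pairs `b ∈ B`, `c ∉ B`, `c < b`, the hook length becoming
`b - c`, and there are exactly `n` such pairs. Moving a bead `b ∈ B` to an empty position `b - d`
lowers the number of pairs with `d ∣ b - c` by one and the number of all pairs by `d`; once no
bead can move, no pair with `d ∣ b - c` is left. Hence `d` times the number of hooks divisible
by `d` is at most `n`.
-/

open Finset Polynomial

theorem prod_one_sub_X_pow_eq {ι : Type*} (s : Finset ι) (f : ι → ℕ) (D : Finset ℕ)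
    (hf : ∀ i ∈ s, 0 < f i) (hD : ∀ i ∈ s, (f i).divisors ⊆ D) :
    ∏ i ∈ s, (1 - X ^ f i : ℤ[X]) =
      (-1) ^ #s * ∏ d ∈ D, cyclotomic d ℤ ^ #{i ∈ s | d ∣ f i} := by
  have one_sub_X_pow (i) (hi : i ∈ s) :
      (1 - X ^ f i : ℤ[X]) = -∏ d ∈ D, if d ∣ f i then cyclotomic d ℤ else 1 := by
    have hdiv : {d ∈ D | d ∣ f i} = (f i).divisors := by
      ext d
      have := @hD i hi d
      simp only [mem_filter, Nat.mem_divisors] at this ⊢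
      exact ⟨fun h => ⟨h.2, (hf i hi).ne'⟩, fun h => ⟨this h, h.1⟩⟩
    rw [← prod_filter, hdiv, prod_cyclotomic_eq_X_pow_sub_one (hf i hi), neg_sub]
  rw [prod_congr rfl one_sub_X_pow, prod_neg, prod_comm]
  simp only [← prod_filter, prod_const]

theorem eval_zero_prod_one_sub_X_pow {ι : Type*} (s : Finset ι) (f : ι → ℕ)
    (hf : ∀ i ∈ s, 0 < f i) : eval 0 (∏ i ∈ s, (1 - X ^ f i : ℤ[X])) = 1 := by
  rw [eval_prod]
  exact prod_eq_one fun i hi => by simp [zero_pow (hf i hi).ne']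

theorem exists_prod_one_sub_X_pow_eq_mul {ι κ : Type*} (s : Finset ι) (t : Finset κ)
    (f : ι → ℕ) (g : κ → ℕ) (hf : ∀ i ∈ s, 0 < f i) (hg : ∀ j ∈ t, 0 < g j)
    (hcount : ∀ d, 0 < d → #{j ∈ t | d ∣ g j} ≤ #{i ∈ s | d ∣ f i}) :
    ∃ P : ℤ[X], P.coeff 0 = 1 ∧
      ∏ i ∈ s, (1 - X ^ f i) = P * ∏ j ∈ t, (1 - X ^ g j) := by
  set D := s.biUnion (fun i => (f i).divisors) ∪ t.biUnion (fun j => (g j).divisors)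
  have hsD (i) (hi : i ∈ s) : (f i).divisors ⊆ D :=
    subset_union_left.trans' (subset_biUnion_of_mem (fun i => (f i).divisors) hi)
  have htD (j) (hj : j ∈ t) : (g j).divisors ⊆ D :=
    subset_union_right.trans' (subset_biUnion_of_mem (fun j => (g j).divisors) hj)
  have hD_pos : ∀ d ∈ D, 0 < d := by
    intro d hd
    simp only [D, mem_union, mem_biUnion] at hd
    rcases hd with ⟨i, -, hd⟩ | ⟨j, -, hd⟩ <;> exact Nat.pos_of_mem_divisors hd
  set P : ℤ[X] := (-1) ^ (#s + #t) *
    ∏ d ∈ D, cyclotomic d ℤ ^ (#{i ∈ s | d ∣ f i} - #{j ∈ t | d ∣ g j})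
  have hprod : ∏ i ∈ s, (1 - X ^ f i) = P * ∏ j ∈ t, (1 - X ^ g j) := by
    rw [prod_one_sub_X_pow_eq s f D hf hsD, prod_one_sub_X_pow_eq t g D hg htD]
    have hsign : ((-1) ^ #s : ℤ[X]) = (-1) ^ (#s + #t) * (-1) ^ #t := by
      rw [← pow_add, add_assoc, ← two_mul, pow_add, pow_mul, neg_one_sq, one_pow, mul_one]
    rw [hsign, mul_mul_mul_comm, ← prod_mul_distrib]
    congr 1
    exact prod_congr rfl fun d hd =>
      (pow_sub_mul_pow (cyclotomic d ℤ) (hcount d (hD_pos d hd))).symm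
  refine ⟨P, ?_, hprod⟩
  have h0 := congrArg (eval 0) hprod
  rwa [eval_mul, eval_zero_prod_one_sub_X_pow s f hf, eval_zero_prod_one_sub_X_pow t g hg,
    mul_one, eq_comm, ← coeff_zero_eq_eval_zero] at h0

def gapPairCount (d : ℕ) (B : Finset ℕ) : ℕ :=
  ∑ b ∈ B, #{c ∈ range b | c ∉ B ∧ d ∣ b - c}

def beadPairCount (d : ℕ) (B : Finset ℕ) : ℕ :=
  ∑ b ∈ B, #{c ∈ B | c < b ∧ d ∣ b - c}

def residuePairCount (d : ℕ) (B : Finset ℕ) : ℕ :=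
  ∑ b ∈ B, #{c ∈ B | c ≠ b ∧ c % d = b % d}

theorem card_filter_range_dvd_sub (d b : ℕ) : #{c ∈ range b | d ∣ b - c} = b / d := by
  rw [← Nat.Ioc_filter_dvd_card_eq_div]
  refine card_nbij' (b - ·) (b - ·) ?_ ?_ ?_ ?_ <;> intro c hc <;>
    simp only [coe_filter, mem_range, mem_Ioc, Set.mem_ofPred_eq] at hc ⊢
  · exact ⟨⟨by omega, by omega⟩, hc.2⟩
  · exact ⟨by omega, by rw [Nat.sub_sub_self hc.1.2]; exact hc.2⟩
  · omega
  · omega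

theorem gapPairCount_add_beadPairCount (d : ℕ) (B : Finset ℕ) :
    gapPairCount d B + beadPairCount d B = ∑ b ∈ B, b / d := by
  rw [gapPairCount, beadPairCount, ← sum_add_distrib]
  refine sum_congr rfl fun b _ => ?_
  rw [← card_filter_range_dvd_sub,
    ← card_union_of_disjoint
      (disjoint_left.2 fun c h h' => (mem_filter.1 h).2.1 (mem_filter.1 h').1)]
  congr 1
  ext c
  simp only [mem_union, mem_filter, mem_range]
  tauto

theorem two_mul_beadPairCount (d : ℕ) (B : Finset ℕ) :
    2 * beadPairCount d B = residuePairCount d B := by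
  have below_or_above (b c : ℕ) : (c ≠ b ∧ c % d = b % d) ↔
      (c < b ∧ d ∣ b - c) ∨ (b < c ∧ d ∣ c - b) := by
    rcases lt_trichotomy c b with h | rfl | h
    · simp [h, h.ne, h.not_gt, ← Nat.modEq_iff_dvd' h.le, Nat.ModEq]
    · simp
    · simp [h, h.ne', h.not_gt, ← Nat.modEq_iff_dvd' h.le, Nat.ModEq, eq_comm]
  have hswap : beadPairCount d B = ∑ b ∈ B, #{c ∈ B | b < c ∧ d ∣ c - b} := by
    simp only [beadPairCount, card_filter]
    exact sum_comm
  rw [two_mul]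
  nth_rw 2 [hswap]
  rw [beadPairCount, residuePairCount, ← sum_add_distrib]
  refine sum_congr rfl fun b _ => ?_
  rw [← card_union_of_disjoint (disjoint_filter.2 fun c _ h h' => by omega), ← filter_or]
  simp only [below_or_above]

theorem residuePairCount_image (d : ℕ) (B : Finset ℕ) {f : ℕ → ℕ} (hf : Set.InjOn f B)
    (hres : ∀ x ∈ B, f x % d = x % d) :
    residuePairCount d (B.image f) = residuePairCount d B := by
  rw [residuePairCount, sum_image hf, residuePairCount]
  refine sum_congr rfl fun b hb => ?_
  rw [filter_image, card_image_of_injOn (hf.mono (filter_subset _ _))]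
  congr 1
  refine filter_congr fun c hc => ?_
  rw [hf.ne_iff hc hb, hres c hc, hres b hb]

theorem residuePairCount_one (B : Finset ℕ) : residuePairCount 1 B = #B * (#B - 1) := by
  rw [residuePairCount, ← smul_eq_mul, ← sum_const]
  refine sum_congr rfl fun b hb => ?_
  rw [← card_erase_of_mem hb]
  congr 1
  ext c
  simp only [mem_filter, mem_erase, Nat.mod_one, and_true]
  exact and_comm

theorem sum_image_swap_add {α M : Type*} [DecidableEq α] [AddCommMonoid M] (φ : α → M)
    {B : Finset α} {p q : α} (hp : p ∈ B) (hq : q ∉ B) :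
    ∑ b ∈ B.image (Equiv.swap p q), φ b + φ p = ∑ b ∈ B, φ b + φ q := by
  have fixed : ∀ b ∈ B.erase p, φ (Equiv.swap p q b) = φ b := fun b hb => by
    rw [Equiv.swap_apply_of_ne_of_ne (ne_of_mem_erase hb)
      (by rintro rfl; exact hq (mem_of_mem_erase hb))]
  rw [sum_image (Equiv.swap p q).injective.injOn, ← sum_erase_add _ _ hp,
    ← sum_erase_add _ _ hp,
    Equiv.swap_apply_left, sum_congr rfl fixed, add_right_comm]

/- `gapPairCount e B = ∑ b ∈ B, b / e - beadPairCount e B`, and `beadPairCount e B` only depends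
on the number of beads in each residue class mod `e`, which moving a bead by a multiple of `e`
does not change. -/
theorem gapPairCount_image_swap_add {e d p : ℕ} {B : Finset ℕ} (hed : e ∣ d) (hp : p ∈ B)
    (hdp : d ≤ p) (hpd : p - d ∉ B) :
    gapPairCount e (B.image (Equiv.swap p (p - d))) + d / e = gapPairCount e B := by
  have hmod : (p - d) % e = p % e :=
    (Nat.modEq_iff_dvd' (Nat.sub_le p d)).2 (by rwa [Nat.sub_sub_self hdp])
  have hres : ∀ x ∈ B, Equiv.swap p (p - d) x % e = x % e := fun x _ => by
    rw [Equiv.swap_apply_def]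
    split_ifs <;> subst_vars <;> simp only [hmod]
  have hdiv : p / e = d / e + (p - d) / e := by
    rw [← Nat.add_div_of_dvd_right hed, Nat.add_sub_cancel' hdp]
  have := sum_image_swap_add (· / e) hp hpd
  have := gapPairCount_add_beadPairCount e B
  have := gapPairCount_add_beadPairCount e (B.image (Equiv.swap p (p - d)))
  have := two_mul_beadPairCount e B
  have := two_mul_beadPairCount e (B.image (Equiv.swap p (p - d)))
  have := residuePairCount_image e B (Equiv.swap p (p - d)).injective.injOn hres
  omega

theorem gapPairCount_eq_zero_of_sub_mem {d : ℕ} {B : Finset ℕ}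
    (hB : ∀ p ∈ B, d ≤ p → p - d ∈ B) : gapPairCount d B = 0 := by
  have sub_mul_mem (t : ℕ) : ∀ x ∈ B, d * t ≤ x → x - d * t ∈ B := by
    induction t with
    | zero => simp
    | succ t ih =>
      intro x hx hle
      rw [mul_add_one, ← Nat.sub_sub]
      exact hB _ (ih x hx (by linarith)) (by rw [mul_add_one] at hle; omega)
  refine sum_eq_zero fun b hb => card_eq_zero.2 <| filter_eq_empty_iff.2 ?_
  rintro c hc ⟨hcB, t, ht⟩
  rw [mem_range] at hc
  exact hcB (by simpa [← ht, Nat.sub_sub_self hc.le] using sub_mul_mem t b hb (by omega))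

theorem mul_gapPairCount_le (d : ℕ) (B : Finset ℕ) :
    d * gapPairCount d B ≤ gapPairCount 1 B := by
  induction h : ∑ b ∈ B, b using Nat.strong_induction_on generalizing B with
  | _ s ih =>
  by_cases hslide : ∃ p ∈ B, d ≤ p ∧ p - d ∉ B
  · obtain ⟨p, hp, hdp, hpd⟩ := hslide
    rcases d.eq_zero_or_pos with rfl | hd
    · simp
    have hsum := sum_image_swap_add id hp hpd
    have hstep_d := gapPairCount_image_swap_add (dvd_refl d) hp hdp hpd
    have hstep_one := gapPairCount_image_swap_add (one_dvd d) hp hdp hpd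
    rw [Nat.div_self hd] at hstep_d
    rw [Nat.div_one] at hstep_one
    have := ih _ (by simp only [id] at hsum; omega) (B.image (Equiv.swap p (p - d))) rfl
    calc d * gapPairCount d B = d * gapPairCount d (B.image (Equiv.swap p (p - d))) + d := by
          rw [← hstep_d, mul_add_one]
      _ ≤ gapPairCount 1 B := by omega
  · push Not at hslide
    rw [gapPairCount_eq_zero_of_sub_mem hslide, mul_zero]
    exact Nat.zero_le _

namespace YoungDiagram

variable (μ : YoungDiagram)

def betaNumber (i : ℕ) : ℕ := μ.rowLen i + (μ.colLen 0 - 1 - i)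

def betaSet : Finset ℕ := (range (μ.colLen 0)).image μ.betaNumber

/- The empty position at the foot of column `j`: the hook of the cell `(i, j)` joins it to the
bead `betaNumber i`. -/
def gapNumber (j : ℕ) : ℕ := j + (μ.colLen 0 - μ.colLen j)

theorem betaNumber_strictAntiOn : StrictAntiOn μ.betaNumber (Set.Iio (μ.colLen 0)) := by
  intro i _ i' hi' h
  have := μ.rowLen_anti i i' h.le
  simp only [betaNumber, Set.mem_Iio] at hi' ⊢
  omega

theorem card_betaSet : #μ.betaSet = μ.colLen 0 := by
  rw [betaSet, card_image_of_injOn (by simpa using μ.betaNumber_strictAntiOn.injOn), card_range]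

theorem card_eq_sum_rowLen : μ.card = ∑ i ∈ range (μ.colLen 0), μ.rowLen i := by
  have fst_lt (c) (hc : c ∈ μ.cells) : c.1 ∈ range (μ.colLen 0) := by
    rw [mem_cells, mem_iff_lt_colLen] at hc
    exact mem_range.2 (hc.trans_le (μ.colLen_anti 0 c.2 c.2.zero_le))
  rw [YoungDiagram.card, card_eq_sum_card_fiberwise fst_lt]
  exact sum_congr rfl fun i _ => (μ.rowLen_eq_card).symm

theorem two_mul_sum_betaSet :
    2 * ∑ b ∈ μ.betaSet, b = 2 * μ.card + μ.colLen 0 * (μ.colLen 0 - 1) := by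
  rw [betaSet, sum_image (by simpa using μ.betaNumber_strictAntiOn.injOn), card_eq_sum_rowLen]
  have := sum_range_reflect id (μ.colLen 0)
  simp only [betaNumber, sum_add_distrib, id] at this ⊢
  have := sum_range_id_mul_two (μ.colLen 0)
  omega

theorem gapPairCount_one_betaSet : gapPairCount 1 μ.betaSet = μ.card := by
  have := gapPairCount_add_beadPairCount 1 μ.betaSet
  have := two_mul_beadPairCount 1 μ.betaSet
  have := residuePairCount_one μ.betaSet
  have := μ.two_mul_sum_betaSet
  simp only [Nat.div_one, card_betaSet] at *
  omega

theorem hookLength_pos {c : ℕ × ℕ} (hc : c ∈ μ) : 0 < hookLength μ c := by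
  have := mem_iff_lt_rowLen.1 hc
  have := mem_iff_lt_colLen.1 hc
  simp only [hookLength]
  omega

theorem gapNumber_add_hookLength {i j : ℕ} (h : (i, j) ∈ μ) :
    μ.gapNumber j + hookLength μ (i, j) = μ.betaNumber i := by
  have := mem_iff_lt_rowLen.1 h
  have := mem_iff_lt_colLen.1 h
  have := μ.colLen_anti 0 j j.zero_le
  simp only [gapNumber, hookLength, betaNumber]
  omega

theorem gapNumber_strictMono : StrictMono μ.gapNumber := by
  intro j j' h
  have := μ.colLen_anti j j' h.le
  have := μ.colLen_anti 0 j j.zero_le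
  simp only [gapNumber]
  omega

theorem gapNumber_notMem_betaSet (j : ℕ) : μ.gapNumber j ∉ μ.betaSet := by
  simp only [betaSet, mem_image, mem_range, not_exists, not_and]
  intro i hi
  have hrow_col : j < μ.rowLen i ↔ i < μ.colLen j :=
    mem_iff_lt_rowLen.symm.trans mem_iff_lt_colLen
  simp only [gapNumber, betaNumber]
  omega

theorem card_filter_dvd_hookLength_le_gapPairCount (d : ℕ) :
    #{c ∈ μ.cells | d ∣ hookLength μ c} ≤ gapPairCount d μ.betaSet := by
  rw [gapPairCount, ← card_sigma]
  refine card_le_card_of_injOn (fun c => ⟨μ.betaNumber c.1, μ.gapNumber c.2⟩) ?_ ?_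
  · rintro ⟨i, j⟩ hc
    rw [coe_filter, Set.mem_ofPred_eq, mem_cells] at hc
    have hsum := μ.gapNumber_add_hookLength hc.1
    have hpos := μ.hookLength_pos hc.1
    have hi : i < μ.colLen 0 :=
      (mem_iff_lt_colLen.1 hc.1).trans_le (μ.colLen_anti 0 j j.zero_le)
    simp only [coe_sigma, Set.mem_sigma_iff, mem_coe, mem_filter, mem_range]
    refine ⟨mem_image_of_mem _ (mem_range.2 hi), by omega, μ.gapNumber_notMem_betaSet j, ?_⟩
    rw [← hsum, Nat.add_sub_cancel_left]
    exact hc.2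
  · rintro ⟨i, j⟩ hc ⟨i', j'⟩ hc' h
    simp only [coe_filter, Set.mem_ofPred_eq, mem_cells, mem_iff_lt_colLen] at hc hc'
    simp only [Sigma.mk.injEq, heq_eq_eq] at h
    have hi := hc.1.trans_le (μ.colLen_anti 0 j j.zero_le)
    have hi' := hc'.1.trans_le (μ.colLen_anti 0 j' j'.zero_le)
    rw [Prod.mk.injEq]
    exact ⟨μ.betaNumber_strictAntiOn.injOn hi hi' h.1, μ.gapNumber_strictMono.injective h.2⟩

theorem mul_card_filter_dvd_hookLength_le (d : ℕ) :
    d * #{c ∈ μ.cells | d ∣ hookLength μ c} ≤ μ.card :=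
  calc d * #{c ∈ μ.cells | d ∣ hookLength μ c} ≤ d * gapPairCount d μ.betaSet :=
        Nat.mul_le_mul_left d (μ.card_filter_dvd_hookLength_le_gapPairCount d)
    _ ≤ gapPairCount 1 μ.betaSet := mul_gapPairCount_le d μ.betaSet
    _ = μ.card := μ.gapPairCount_one_betaSet

end YoungDiagram

theorem stmt0_general (n : ℕ) (μ : YoungDiagram) (hμ : μ.card = n) :
    ∃ P : Polynomial ℤ, P.coeff 0 = 1 ∧
      ∏ i ∈ Finset.range n, (1 - Polynomial.X ^ (i + 1)) =
        P * ∏ c ∈ μ.cells, (1 - Polynomial.X ^ hookLength μ c) := by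
  subst hμ
  refine exists_prod_one_sub_X_pow_eq_mul _ _ (· + 1) (hookLength μ) (fun i _ => i.succ_pos)
    (fun c hc => μ.hookLength_pos ((YoungDiagram.mem_cells c).1 hc)) fun d hd => ?_
  rw [Nat.card_multiples, Nat.le_div_iff_mul_le hd, mul_comm]
  exact μ.mul_card_filter_dvd_hookLength_le d

/-- For a partition `μ` of `n > 0`, the modified Kostka polynomial
`K_μ(q) = ∏_{i=1}^n (1-q^i) / ∏_{u∈μ} (1-q^{h_μ(u)})` is a polynomial with
integer coefficients and constant term `1`. -/
theorem stmt0 (n : ℕ) (hn : 0 < n) (μ : YoungDiagram) (hμ : μ.card = n) :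
    ∃ P : Polynomial ℤ, P.coeff 0 = 1 ∧
      ∏ i ∈ Finset.range n, (1 - Polynomial.X ^ (i + 1)) =
        P * ∏ c ∈ μ.cells, (1 - Polynomial.X ^ hookLength μ c) :=
  stmt0_general n μ hμ
end

section
/- The expansion of the n-th power of the first power-sum symmetric function p_1 in the basis of Schur functions is p_1^n = Σ_{λ ⊢ n} f^λ · s_λ, where f^λ is the number of standard Young tableaux of shape λ. -/
/-- The type of standard Young tableaux of shape `μ`. -/
def SYT (μ : YoungDiagram) : Type :=
  {f : μ.cells → Fin μ.card //
    Function.Bijective f ∧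
    ∀ a b : μ.cells, (a : ℕ × ℕ).1 ≤ (b : ℕ × ℕ).1 → (a : ℕ × ℕ).2 ≤ (b : ℕ × ℕ).2 →
      a ≠ b → f a < f b}

/-- The number of standard Young tableaux of shape `μ`. -/
noncomputable def sytCount (μ : YoungDiagram) : ℕ := Nat.card (SYT μ)

/-- The bialternant `a_{λ+δ} = det (x_i^{λ_j + N - 1 - j})` in `N` variables;
for `λ = ∅` this is the Vandermonde determinant `a_δ`. -/
noncomputable def bialternant (N : ℕ) (μ : YoungDiagram) : MvPolynomial (Fin N) ℚ :=
  Matrix.det (Matrix.of fun i j : Fin N => MvPolynomial.X i ^ (μ.rowLen j + (N - 1 - (j : ℕ))))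

/-! Multiplying the bialternant `a_{λ+δ} = det (x_i ^ (λ_j + N - 1 - j))` by `p_1 = ∑ x_i`
raises one column exponent at a time (Leibniz expansion), so
`p_1 a_{λ+δ} = ∑_j a_{λ+e_j+δ}`; when row `j` cannot receive a box, the exponent of column
`j` becomes that of column `j - 1` and the term vanishes. Hence the coefficient of `a_{λ+δ}`
in `p_1^n a_δ` satisfies `c_λ = ∑_{μ ⋖ λ} c_μ`. The number `f^λ` satisfies the same
recursion: the largest entry of a standard tableau occupies a corner of `λ`, and deleting it
leaves a standard tableau of the smaller shape; the same recursion, over maximal elements,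
counts the linear extensions of any finite poset. -/

open Finset Function

theorem Matrix.sum_det_updateCol_mul {R ι : Type*} [CommRing R] [Fintype ι] [DecidableEq ι]
    (M : Matrix ι ι R) (x : ι → R) :
    ∑ j, (M.updateCol j fun i => x i * M i j).det = (∑ i, x i) * M.det := by
  simp only [Matrix.det_apply, Matrix.updateCol_apply, mul_sum]
  rw [sum_comm]
  refine sum_congr rfl fun σ _ => ?_
  have hprod (j : ι) : ∏ i, (if i = j then x (σ i) * M (σ i) j else M (σ i) i) =
      x (σ j) * ∏ i, M (σ i) i := by
    rw [← Fintype.prod_ite_eq' j (fun i => x (σ i)), ← prod_mul_distrib]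
    refine prod_congr rfl fun i _ => ?_
    split_ifs with h
    · rw [h]
    · rw [one_mul]
  rw [mul_smul_comm, ← smul_sum, sum_congr rfl fun j _ => hprod j, ← sum_mul,
    Equiv.sum_comp σ x]

namespace Finset

variable {α : Type*} [PartialOrder α]

def LinearExt (s : Finset α) : Type _ := {f : s → Fin #s // Injective f ∧ StrictMono f}

instance (s : Finset α) : Finite (LinearExt s) := by
  unfold LinearExt; infer_instance

namespace LinearExt

variable {s : Finset α}

theorem card_empty : Nat.card (LinearExt (∅ : Finset α)) = 1 := by
  rw [Nat.card_eq_one_iff_exists]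
  exact ⟨⟨isEmptyElim, fun a => isEmptyElim a, fun a => isEmptyElim a⟩,
    fun f => Subtype.ext (funext isEmptyElim)⟩

theorem bijective (f : LinearExt s) : Bijective f.1 :=
  (Fintype.bijective_iff_injective_and_card f.1).2 ⟨f.2.1, by simp⟩

variable [DecidableEq α] {m : α}

def extendTop (hm : Maximal (· ∈ s) m) (g : LinearExt (s.erase m)) : LinearExt s := by
  refine ⟨fun x => if h : (x : α) = m then ⟨#(s.erase m), card_erase_lt_of_mem hm.1⟩
    else Fin.castLE card_erase_le (g.1 ⟨x, mem_erase.2 ⟨h, x.2⟩⟩), ?_, ?_⟩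
  · intro a b hab
    simp only [Fin.ext_iff] at hab
    split_ifs at hab with ha hb hb
    · exact Subtype.ext (ha.trans hb.symm)
    · exact absurd hab (g.1 _).isLt.ne'
    · exact absurd hab (g.1 _).isLt.ne
    · simpa using g.2.1 (Fin.ext hab)
  · intro a b hab
    simp only [Fin.lt_def]
    split_ifs with ha hb hb
    · exact absurd (ha.trans hb.symm) (Subtype.coe_injective.ne hab.ne)
    · exact absurd (hm.2 b.2 (ha ▸ hab.le)) (ha ▸ (show (a : α) < b from hab).not_ge)
    · exact (g.1 _).isLt
    · exact g.2.2 (show (a : α) < b from hab)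

theorem val_extendTop (hm : Maximal (· ∈ s) m) (g : LinearExt (s.erase m)) (x : s) :
    ((extendTop hm g).1 x : ℕ) =
      if h : (x : α) = m then #(s.erase m) else g.1 ⟨x, mem_erase.2 ⟨h, x.2⟩⟩ := by
  dsimp only [extendTop]; split <;> rfl

theorem eq_of_extendTop_eq {m' : α} {hm : Maximal (· ∈ s) m} {hm' : Maximal (· ∈ s) m'}
    {g : LinearExt (s.erase m)} {g' : LinearExt (s.erase m')}
    (h : extendTop hm g = extendTop hm' g') : m = m' := by
  by_contra hne
  have hval := congrArg (fun f : LinearExt s => ((f.1 ⟨m, hm.1⟩ : Fin #s) : ℕ)) h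
  simp only [val_extendTop, dite_true, dif_neg hne] at hval
  have hlt := (g'.1 ⟨m, mem_erase.2 ⟨hne, hm.1⟩⟩).isLt
  have := card_erase_of_mem hm.1
  have := card_erase_of_mem hm'.1
  omega

theorem extendTop_injective (hm : Maximal (· ∈ s) m) : Injective (extendTop hm) := by
  intro g g' h
  refine Subtype.ext (funext fun x => Fin.ext ?_)
  have hval := congrArg (fun f : LinearExt s => ((f.1 ⟨x, mem_of_mem_erase x.2⟩ : Fin #s) : ℕ)) h
  simpa only [val_extendTop, dif_neg (ne_of_mem_erase x.2)] using hval

theorem exists_extendTop_eq (hs : s.Nonempty) (f : LinearExt s) :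
    ∃ m, ∃ hm : Maximal (· ∈ s) m, ∃ g, extendTop hm g = f := by
  obtain ⟨⟨m, hms⟩, hfm⟩ := f.bijective.2 ⟨#s - 1, Nat.sub_lt hs.card_pos one_pos⟩
  replace hfm : (f.1 ⟨m, hms⟩ : ℕ) = #s - 1 := by rw [hfm]
  have hcard : #(s.erase m) = #s - 1 := card_erase_of_mem hms
  have hlt (x : s) (hx : (x : α) ≠ m) : (f.1 x : ℕ) < #s - 1 := by
    have hne : f.1 x ≠ f.1 ⟨m, hms⟩ := f.2.1.ne fun h => hx (congrArg Subtype.val h)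
    rw [Ne, Fin.ext_iff, hfm] at hne
    have := (f.1 x).isLt
    omega
  have hm : Maximal (· ∈ s) m := by
    refine ⟨hms, fun b hb hmb => hmb.eq_or_lt.elim (fun h => h.ge) fun hlt' => ?_⟩
    have := Fin.lt_def.1 (f.2.2 (show (⟨m, hms⟩ : s) < ⟨b, hb⟩ from hlt'))
    have := (f.1 ⟨b, hb⟩).isLt
    omega
  let g : LinearExt (s.erase m) :=
    ⟨fun x => ⟨f.1 ⟨x, mem_of_mem_erase x.2⟩, hcard ▸ hlt _ (ne_of_mem_erase x.2)⟩,
      fun a b hab => by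
        simp only [Fin.mk.injEq, Fin.val_inj] at hab
        simpa using f.2.1 hab,
      fun a b hab => f.2.2 (show (a : α) < b from hab)⟩
  refine ⟨m, hm, g, Subtype.ext (funext fun x => Fin.ext ?_)⟩
  rw [val_extendTop]
  split_ifs with hx
  · rw [hcard, show x = ⟨m, hms⟩ from Subtype.ext hx, hfm]
  · rfl

open scoped Classical in
theorem card_eq_sum_card_erase (hs : s.Nonempty) :
    Nat.card (LinearExt s) = ∑ m ∈ s with Maximal (· ∈ s) m, Nat.card (LinearExt (s.erase m)) := by
  let Φ : (Σ m : {m // m ∈ s.filter (Maximal (· ∈ s))}, LinearExt (s.erase m)) → LinearExt s :=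
    fun p => extendTop (mem_filter.1 p.1.2).2 p.2
  have hΦ : Bijective Φ := by
    refine ⟨?_, fun f => ?_⟩
    · rintro ⟨⟨m, hm⟩, g⟩ ⟨⟨m', hm'⟩, g'⟩ h
      obtain rfl := eq_of_extendTop_eq h
      obtain rfl := extendTop_injective _ h
      rfl
    · obtain ⟨m, hm, g, rfl⟩ := exists_extendTop_eq hs f
      exact ⟨⟨⟨m, mem_filter.2 ⟨hm.1, hm⟩⟩, g⟩, rfl⟩
  rw [← Nat.card_eq_of_bijective Φ hΦ, Nat.card_sigma]
  exact sum_coe_sort (s.filter (Maximal (· ∈ s))) fun m => Nat.card (LinearExt (s.erase m))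

end LinearExt
end Finset

namespace YoungDiagram

variable {μ ν : YoungDiagram}

instance : DecidableLE YoungDiagram := fun _ _ => decidable_of_iff _ cells_subset_iff

theorem colLen_zero_le_iff {N : ℕ} : μ.colLen 0 ≤ N ↔ (N, 0) ∉ μ := by
  rw [mem_iff_lt_colLen, not_lt]

theorem eq_bot_of_card_eq_zero (h : μ.card = 0) : μ = ⊥ :=
  YoungDiagram.ext (card_eq_zero.1 h)

theorem cells_subset_range_card (μ : YoungDiagram) :
    μ.cells ⊆ range μ.card ×ˢ range μ.card := by
  rintro ⟨i, j⟩ hc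
  rw [mem_cells] at hc
  have hcol : μ.colLen j ≤ μ.card := colLen_eq_card μ ▸ card_le_card (filter_subset _ _)
  have hrow : μ.rowLen i ≤ μ.card := rowLen_eq_card μ ▸ card_le_card (filter_subset _ _)
  have := mem_iff_lt_colLen.1 hc
  have := mem_iff_lt_rowLen.1 hc
  simp only [mem_product, mem_range]
  omega

instance (n : ℕ) : Finite {μ : YoungDiagram // μ.card = n} := by
  refine Finite.of_injective
    (fun μ => (⟨μ.1.cells, ?_⟩ : (range n ×ˢ range n).powerset)) fun μ ν h => ?_
  · exact mem_powerset.2 (μ.2 ▸ cells_subset_range_card μ.1 :)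
  · exact Subtype.ext (YoungDiagram.ext (congrArg Subtype.val h))

abbrev Shapes (N n : ℕ) : Type := {μ : YoungDiagram // μ.card = n ∧ μ.colLen 0 ≤ N}

instance (N n : ℕ) : Finite (Shapes N n) :=
  Finite.of_injective (fun μ => (⟨μ.1, μ.2.1⟩ : {μ : YoungDiagram // μ.card = n}))
    fun _ _ h => Subtype.ext (congrArg Subtype.val h :)

noncomputable instance (N n : ℕ) : Fintype (Shapes N n) := Fintype.ofFinite _

theorem exists_cells_eq_insert (h : μ ≤ ν) (hcard : ν.card = μ.card + 1) :
    ∃ c ∉ μ, ν.cells = insert c μ.cells := by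
  obtain ⟨c, hc, hins⟩ := exists_eq_insert_iff.2 ⟨cells_subset_iff.2 h, hcard.symm⟩
  exact ⟨c, hc, hins.symm⟩

def eraseCorner (ν : YoungDiagram) {c : ℕ × ℕ} (hc : Maximal (· ∈ ν.cells) c) :
    YoungDiagram where
  cells := ν.cells.erase c
  isLowerSet a b hba ha := by
    simp only [coe_erase, Set.mem_sdiff, mem_coe, Set.mem_singleton_iff] at ha ⊢
    refine ⟨ν.isLowerSet hba ha.1, fun hbc => ha.2 ?_⟩
    subst hbc
    exact le_antisymm (hc.2 ha.1 hba) hba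

theorem maximal_of_cells_eq_insert {c : ℕ × ℕ} (hc : c ∉ μ) (h : ν.cells = insert c μ.cells) :
    Maximal (· ∈ ν.cells) c := by
  refine ⟨h ▸ mem_insert_self c _, fun y hy hcy => ?_⟩
  rw [h, mem_insert] at hy
  obtain rfl | hy := hy
  · exact le_rfl
  · exact absurd (μ.isLowerSet hcy hy) hc

def Addable (μ : YoungDiagram) (i : ℕ) : Prop := i = 0 ∨ μ.rowLen i < μ.rowLen (i - 1)

instance (μ : YoungDiagram) (i : ℕ) : Decidable (μ.Addable i) :=
  inferInstanceAs (Decidable (_ ∨ _))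

def addBox (μ : YoungDiagram) (i : ℕ) (h : μ.Addable i) : YoungDiagram where
  cells := insert (i, μ.rowLen i) μ.cells
  isLowerSet := by
    rintro a ⟨b₁, b₂⟩ hba ha
    simp only [coe_insert, Set.mem_insert_iff, mem_coe, mem_cells] at ha ⊢
    rcases ha with rfl | ha
    · by_cases hb : (b₁, b₂) = (i, μ.rowLen i)
      · exact .inl hb
      refine .inr (mem_iff_lt_rowLen.2 ?_)
      obtain ⟨hb₁, hb₂⟩ := Prod.mk_le_mk.1 hba
      rcases hb₁.eq_or_lt with rfl | hb₁
      · exact lt_of_le_of_ne hb₂ fun h => hb (by rw [h])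
      · have := μ.rowLen_anti b₁ (i - 1) (by omega)
        have := h.resolve_left (by omega)
        omega
    · exact .inr (μ.isLowerSet hba ha)

variable {i : ℕ}

theorem mem_addBox {h : μ.Addable i} {c : ℕ × ℕ} :
    c ∈ μ.addBox i h ↔ c = (i, μ.rowLen i) ∨ c ∈ μ :=
  mem_insert

theorem rowLen_addBox (h : μ.Addable i) (k : ℕ) :
    (μ.addBox i h).rowLen k = if k = i then μ.rowLen i + 1 else μ.rowLen k := by
  refine eq_of_forall_lt_iff fun j => ?_
  rw [← mem_iff_lt_rowLen, mem_addBox, mem_iff_lt_rowLen, Prod.ext_iff]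
  split_ifs with hk
  · subst hk
    simp only [true_and]
    omega
  · simp [hk]

theorem card_addBox (h : μ.Addable i) : (μ.addBox i h).card = μ.card + 1 :=
  card_insert_of_notMem (by simp [mem_iff_lt_rowLen])

theorem le_addBox (h : μ.Addable i) : μ ≤ μ.addBox i h :=
  fun _ hc => mem_addBox.2 (.inr hc)

theorem exists_addBox_eq (h : μ ≤ ν) (hcard : ν.card = μ.card + 1) :
    ∃ i, ∃ hi : μ.Addable i, μ.addBox i hi = ν := by
  obtain ⟨⟨i, j⟩, hc, hν⟩ := exists_cells_eq_insert h hcard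
  have hmem (x : ℕ × ℕ) : x ∈ ν ↔ x = (i, j) ∨ x ∈ μ := by
    rw [← mem_cells, hν, mem_insert, mem_cells]
  have hij : (i, j) ∈ ν := (hmem _).2 (.inl rfl)
  obtain rfl : μ.rowLen i = j := by
    have hle : μ.rowLen i ≤ j := not_lt.1 (mt mem_iff_lt_rowLen.2 hc)
    rcases (hmem _).1 (ν.up_left_mem le_rfl hle hij) with h' | h'
    · exact (Prod.ext_iff.1 h').2
    · exact absurd (mem_iff_lt_rowLen.1 h') (lt_irrefl _)
  have hi : μ.Addable i := by
    refine or_iff_not_imp_left.2 fun hi0 => mem_iff_lt_rowLen.1 ?_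
    rcases (hmem _).1 (ν.up_left_mem (Nat.sub_le i 1) le_rfl hij) with h' | h'
    · exact absurd (Prod.ext_iff.1 h').1 (by omega)
    · exact h'
  exact ⟨i, hi, YoungDiagram.ext hν.symm⟩

theorem eq_of_addBox_eq {i' : ℕ} {h : μ.Addable i} {h' : μ.Addable i'}
    (he : μ.addBox i h = μ.addBox i' h') : i = i' := by
  have hmem : (i, μ.rowLen i) ∈ μ.addBox i' h' := he ▸ mem_addBox.2 (.inl rfl)
  rcases mem_addBox.1 hmem with h'' | h''
  · exact (Prod.ext_iff.1 h'').1
  · exact absurd (mem_iff_lt_rowLen.1 h'') (lt_irrefl _)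

end YoungDiagram

open MvPolynomial YoungDiagram

theorem sytCount_eq_card_linearExt (μ : YoungDiagram) :
    sytCount μ = Nat.card (LinearExt μ.cells) := by
  refine Nat.card_congr (Equiv.subtypeEquivRight fun f => ?_)
  rw [Fintype.bijective_iff_injective_and_card]
  simp [StrictMono, lt_iff_le_and_ne, ← Subtype.coe_le_coe, Prod.le_def, and_imp]

theorem sytCount_bot : sytCount ⊥ = 1 := by
  rw [sytCount_eq_card_linearExt, cells_bot, LinearExt.card_empty]

theorem sytCount_eq_sum_sytCount_le {N n : ℕ} (ν : Shapes N (n + 1)) :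
    sytCount ν = ∑ μ : Shapes N n, if μ.1 ≤ ν.1 then sytCount μ else 0 := by
  classical
  have hne : ν.1.cells.Nonempty := card_pos.1 (by rw [show #ν.1.cells = n + 1 from ν.2.1]; omega)
  rw [sytCount_eq_card_linearExt, LinearExt.card_eq_sum_card_erase hne, ← sum_filter]
  refine sum_bij (fun c hc => ⟨eraseCorner ν (mem_filter.1 hc).2, ?_, ?_⟩) ?_ ?_ ?_ ?_
  · exact (card_erase_of_mem (mem_filter.1 hc).1).trans (Nat.sub_eq_of_eq_add ν.2.1)
  · exact colLen_zero_le_iff.2 fun h => colLen_zero_le_iff.1 ν.2.2 (mem_of_mem_erase h)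
  · exact fun c hc => mem_filter.2 ⟨mem_univ _, fun x hx => mem_of_mem_erase hx⟩
  · intro c hc c' _ h
    exact (erase_inj _ (mem_filter.1 hc).1).1 (congrArg (cells ∘ Subtype.val) h)
  · intro μ hμ
    obtain ⟨c, hc, hν⟩ := exists_cells_eq_insert (mem_filter.1 hμ).2 (by rw [ν.2.1, μ.2.1])
    refine ⟨c, mem_filter.2 ⟨hν ▸ mem_insert_self c _, maximal_of_cells_eq_insert hc hν⟩, ?_⟩
    refine Subtype.ext (YoungDiagram.ext ?_)
    change ν.1.cells.erase c = μ.1.cells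
    rw [hν, erase_insert hc]
  · intro c hc
    rw [sytCount_eq_card_linearExt]
    rfl

theorem sum_X_mul_bialternant (N : ℕ) (μ : YoungDiagram) :
    (∑ i : Fin N, X i : MvPolynomial (Fin N) ℚ) * bialternant N μ =
      ∑ j : Fin N, if h : μ.Addable j then bialternant N (μ.addBox j h) else 0 := by
  rw [bialternant, ← Matrix.sum_det_updateCol_mul]
  refine sum_congr rfl fun j _ => ?_
  split_ifs with h
  · refine congrArg Matrix.det (Matrix.ext fun i k => ?_)
    simp only [Matrix.updateCol_apply, Matrix.of_apply, rowLen_addBox, Fin.val_inj]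
    split_ifs with hk
    · subst hk
      rw [← pow_succ']
      congr 1
      omega
    · rfl
  · obtain ⟨hj0, hle⟩ := not_or.1 h
    have hrow := μ.rowLen_anti (j - 1) j (Nat.sub_le _ 1)
    have hne : j ≠ ⟨j - 1, by omega⟩ := Fin.ne_of_val_ne (by dsimp only; omega)
    refine Matrix.det_zero_of_column_eq hne fun i => ?_
    simp only [Matrix.updateCol_apply, Matrix.of_apply, if_neg hne.symm, ite_true, ← pow_succ']
    congr 1
    omega

theorem sum_addable_eq_sum_le {M : Type*} [AddCommMonoid M] {N n : ℕ} (μ : Shapes N n)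
    (F : YoungDiagram → M) :
    ∑ j : Fin N, (if h : μ.1.Addable j then F (μ.1.addBox j h) else 0) =
      ∑ ν : Shapes N (n + 1), if μ.1 ≤ ν.1 then F ν else 0 := by
  rw [← sum_filter, ← sum_filter_of_ne (p := fun j : Fin N => μ.1.Addable j)
    fun j _ hj => by_contra fun h => hj (dif_neg h)]
  refine sum_bij (fun j hj => ⟨μ.1.addBox j (mem_filter.1 hj).2, ?_, ?_⟩) ?_ ?_ ?_ ?_
  · rw [card_addBox, μ.2.1]
  · refine colLen_zero_le_iff.2 fun hN => ?_
    rcases mem_addBox.1 hN with h | h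
    · exact absurd (Prod.ext_iff.1 h).1 j.isLt.ne'
    · exact colLen_zero_le_iff.1 μ.2.2 h
  · exact fun j hj => mem_filter.2 ⟨mem_univ _, le_addBox (mem_filter.1 hj).2⟩
  · exact fun j hj j' hj' h => Fin.ext (eq_of_addBox_eq (h := (mem_filter.1 hj).2)
      (h' := (mem_filter.1 hj').2) (congrArg Subtype.val h))
  · intro ν hν
    obtain ⟨i, hi, hνi⟩ := exists_addBox_eq (mem_filter.1 hν).2 (by rw [ν.2.1, μ.2.1])
    have hiN : i < N := by
      have hmem : (i, 0) ∈ ν.1 :=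
        hνi ▸ up_left_mem _ le_rfl (Nat.zero_le _) (mem_addBox.2 (.inl rfl))
      exact (mem_iff_lt_colLen.1 hmem).trans_le ν.2.2
    exact ⟨⟨i, hiN⟩, mem_filter.2 ⟨mem_univ _, hi⟩, Subtype.ext hνi⟩
  · exact fun j hj => dif_pos (mem_filter.1 hj).2

/-- Via the bialternant formula `s_λ = a_{λ+δ}/a_δ` in `N` variables; the sum runs over the
partitions of `n` with at most `N` parts. -/
theorem stmt5 (N n : ℕ) :
    (∑ i : Fin N, MvPolynomial.X i : MvPolynomial (Fin N) ℚ) ^ n *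
        bialternant N ⊥ =
      ∑ᶠ μ : {μ : YoungDiagram // μ.card = n ∧ μ.colLen 0 ≤ N},
        (sytCount μ.1 : MvPolynomial (Fin N) ℚ) * bialternant N μ.1 := by
  rw [finsum_eq_sum_of_fintype]
  induction n with
  | zero =>
    let bot : Shapes N 0 := ⟨⊥, rfl, colLen_zero_le_iff.2 (notMem_bot _)⟩
    rw [pow_zero, one_mul, Fintype.sum_eq_single bot
      fun μ hμ => absurd (Subtype.ext (eq_bot_of_card_eq_zero μ.2.1)) hμ, sytCount_bot,
      Nat.cast_one, one_mul]
  | succ n ih =>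
    calc _ = ∑ μ : Shapes N n, (sytCount μ.1 : MvPolynomial (Fin N) ℚ) *
          ((∑ i, X i) * bialternant N μ.1) := by
          rw [pow_succ', mul_assoc, ih, mul_sum]
          exact sum_congr rfl fun _ _ => mul_left_comm _ _ _
      _ = ∑ μ : Shapes N n, ∑ ν : Shapes N (n + 1),
          if μ.1 ≤ ν.1 then (sytCount μ.1 : MvPolynomial (Fin N) ℚ) * bialternant N ν.1
          else 0 := by
          simp only [sum_X_mul_bialternant, sum_addable_eq_sum_le, mul_sum, mul_ite, mul_zero]
      _ = _ := by
          rw [sum_comm]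
          refine sum_congr rfl fun ν _ => ?_
          rw [sytCount_eq_sum_sytCount_le ν, Nat.cast_sum, sum_mul]
          simp only [Nat.cast_ite, Nat.cast_zero, ite_mul, zero_mul]
end

section
/- With notation as above, the character of the ℂ*-action on the tangent space T_{W_λ} Sch_λ of the Schubert cell at its fixed point W_λ equals Σ_{u∈λ} q^{-h_λ(u)}, the sum over boxes of λ of q to the minus hook length. -/
open Finset

namespace YoungDiagram

variable (μ : YoungDiagram)

theorem rowLen_le_card (i : ℕ) : μ.rowLen i ≤ μ.card := by
  rw [rowLen_eq_card]
  exact card_filter_le _ _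

theorem colLen_le_card (j : ℕ) : μ.colLen j ≤ μ.card := by
  rw [colLen_eq_card]
  exact card_filter_le _ _

theorem sum_cells_eq_sum_range_rowLen {M : Type*} [AddCommMonoid M] {n : ℕ}
    (hn : μ.colLen 0 ≤ n) (F : ℕ × ℕ → M) :
    ∑ c ∈ μ.cells, F c = ∑ r ∈ range n, ∑ c ∈ range (μ.rowLen r), F (r, c) := by
  have hmaps : ∀ c ∈ μ.cells, c.1 ∈ range n := fun c hc =>
    mem_range.2 <| (mem_iff_lt_colLen.1 (μ.up_left_mem le_rfl c.2.zero_le hc)).trans_le hn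
  rw [← sum_fiberwise_of_maps_to hmaps]
  refine sum_congr rfl fun r _ => ?_
  rw [← row, row_eq_prod, sum_product, sum_singleton]

variable (n : ℕ)

/-- Positions, among `0, …, 2n-1`, of the boundary steps of `μ` in the `n × n` box that end
row `r` (resp. column `c`); the row pivot `n + r - λ_r` is the exponent `2n - l_i - i` for
`i = n - r`. -/
def rowPivot (r : ℕ) : ℕ := n + r - μ.rowLen r

def colPivot (c : ℕ) : ℕ := n - 1 - c + μ.colLen c

theorem colPivot_ne_rowPivot {c : ℕ} (hc : c < n) (s : ℕ) :
    μ.colPivot n c ≠ μ.rowPivot n s := by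
  unfold colPivot rowPivot
  by_cases hsc : (s, c) ∈ μ
  · have := mem_iff_lt_rowLen.1 hsc
    have := mem_iff_lt_colLen.1 hsc
    omega
  · have := mem_iff_lt_rowLen.not.1 hsc
    have := mem_iff_lt_colLen.not.1 hsc
    omega

theorem colPivot_strictAntiOn : StrictAntiOn (μ.colPivot n) (Set.Iio n) := by
  intro c₁ _ c₂ hc₂ h
  have := μ.colLen_anti c₁ c₂ h.le
  simp only [Set.mem_Iio] at hc₂
  unfold colPivot
  omega

/-- The exponents `j` of the target monomials of the `Hom` factor of row `r`. -/
def freeExponents (r : ℕ) : Finset ℕ :=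
  Ioc (μ.rowPivot n r) (2 * n - 1) \ (Ioo r n).image (μ.rowPivot n)

variable {μ n}

theorem rowPivot_strictMono (hn : μ.card ≤ n) : StrictMono (μ.rowPivot n) := by
  intro r₁ r₂ h
  have := μ.rowLen_anti r₁ r₂ h.le
  have := μ.rowLen_le_card r₁
  unfold rowPivot
  omega

theorem rowPivot_le {r : ℕ} (hr : r < n) : μ.rowPivot n r ≤ 2 * n - 1 := by
  unfold rowPivot
  omega

theorem colPivot_mem_Ioc (hn : μ.card ≤ n) {r c : ℕ} (hrc : (r, c) ∈ μ) :
    μ.colPivot n c ∈ Ioc (μ.rowPivot n r) (2 * n - 1) := by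
  have := mem_iff_lt_rowLen.1 hrc
  have := mem_iff_lt_colLen.1 hrc
  have := μ.rowLen_le_card r
  have := μ.colLen_le_card c
  rw [mem_Ioc]
  unfold colPivot rowPivot
  omega

theorem card_freeExponents (hn : μ.card ≤ n) {r : ℕ} (hr : r < n) :
    #(μ.freeExponents n r) = μ.rowLen r := by
  have hsub : (Ioo r n).image (μ.rowPivot n) ⊆ Ioc (μ.rowPivot n r) (2 * n - 1) := by
    intro j hj
    obtain ⟨s, hs, rfl⟩ := mem_image.1 hj
    rw [mem_Ioo] at hs
    exact mem_Ioc.2 ⟨rowPivot_strictMono hn hs.1, rowPivot_le hs.2⟩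
  have := μ.rowLen_le_card r
  rw [freeExponents, card_sdiff_of_subset hsub,
    card_image_of_injective _ (rowPivot_strictMono hn).injective, Nat.card_Ioc, Nat.card_Ioo]
  unfold rowPivot
  omega

theorem injOn_colPivot (hn : μ.card ≤ n) (r : ℕ) :
    Set.InjOn (μ.colPivot n) (range (μ.rowLen r)) :=
  (μ.colPivot_strictAntiOn n).injOn.mono fun _ hc =>
    (mem_range.1 hc).trans_le ((μ.rowLen_le_card r).trans hn)

theorem image_colPivot_eq_freeExponents (hn : μ.card ≤ n) {r : ℕ} (hr : r < n) :
    (range (μ.rowLen r)).image (μ.colPivot n) = μ.freeExponents n r := by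
  refine eq_of_subset_of_card_le ?_ ?_
  · intro j hj
    obtain ⟨c, hc, rfl⟩ := mem_image.1 hj
    have hrc : (r, c) ∈ μ := mem_iff_lt_rowLen.2 (mem_range.1 hc)
    have hcn : c < n := (mem_range.1 hc).trans_le ((μ.rowLen_le_card r).trans hn)
    refine mem_sdiff.2 ⟨colPivot_mem_Ioc hn hrc, fun hj => ?_⟩
    obtain ⟨s, -, hs⟩ := mem_image.1 hj
    exact μ.colPivot_ne_rowPivot n hcn s hs.symm
  · rw [card_freeExponents hn hr, card_image_of_injOn (injOn_colPivot hn r), card_range]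

theorem rowPivot_sub_colPivot (hn : μ.card ≤ n) {r c : ℕ} (hrc : (r, c) ∈ μ) :
    (μ.rowPivot n r : ℤ) - μ.colPivot n c = -(hookLength μ (r, c) : ℤ) := by
  have := mem_iff_lt_rowLen.1 hrc
  have := mem_iff_lt_colLen.1 hrc
  have := μ.rowLen_le_card r
  dsimp only [colPivot, rowPivot, hookLength]
  omega

end YoungDiagram

open YoungDiagram

/-- For a partition `μ` of `n` with parts `l 0 ≤ … ≤ l (n-1)` (padded by zeros) and
pivots `a i = 2n - l i - (i+1)`, the character of the `ℂ*`-action on the tangent space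
`T_{W_λ}Sch_λ = ∏_i Hom(ℂ z^{a_i}, ⟨z^j : a_i < j ≤ 2n-1, j not a pivot a_k, k < i⟩)`
(the monomial `z^m` having weight `q^{-m}`, so each `Hom` line contributes `q^{a_i - j}`)
equals `∑_{u ∈ μ} q^{-h_μ(u)}`. -/
theorem stmt8 (n : ℕ) (μ : YoungDiagram) (hμ : μ.card = n)
    (l a : ℕ → ℕ) (hl : ∀ i < n, l i = μ.rowLen (n - 1 - i))
    (ha : ∀ i < n, a i = 2 * n - l i - (i + 1)) :
    ∑ i ∈ Finset.range n,
      ∑ j ∈ (Finset.Ioc (a i) (2 * n - 1)).filter (fun j => ∀ k < i, j ≠ a k),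
        LaurentPolynomial.T (R := ℤ) ((a i : ℤ) - (j : ℤ)) =
    ∑ c ∈ μ.cells, LaurentPolynomial.T (R := ℤ) (-(hookLength μ c : ℤ)) := by
  have hn : μ.card ≤ n := hμ.le
  have hpivot : ∀ k < n, a k = μ.rowPivot n (n - 1 - k) := fun k hk => by
    have := μ.rowLen_le_card (n - 1 - k)
    rw [ha k hk, hl k hk, rowPivot]
    omega
  have hreflect : ∀ s < n, n - 1 - (n - 1 - s) = s := fun s hs => by omega
  have hfree : ∀ r < n, (Ioc (a (n - 1 - r)) (2 * n - 1)).filter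
      (fun j => ∀ k < n - 1 - r, j ≠ a k) = μ.freeExponents n r := fun r hr => by
    ext j
    rw [hpivot _ (by omega), hreflect r hr]
    simp only [freeExponents, mem_filter, mem_sdiff, mem_image, mem_Ioo, not_exists, not_and]
    refine and_congr_right fun _ => ⟨fun h s hs hj => ?_, fun h k hk hj => ?_⟩
    · exact h (n - 1 - s) (by omega) (by rw [hpivot _ (by omega), hreflect s hs.2, hj])
    · exact h (n - 1 - k) ⟨by omega, by omega⟩ (by rw [hj, hpivot k (by omega)])
  rw [μ.sum_cells_eq_sum_range_rowLen ((μ.colLen_le_card 0).trans hn), ← sum_range_reflect]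
  refine sum_congr rfl fun r hr => ?_
  rw [mem_range] at hr
  rw [hfree r hr, ← image_colPivot_eq_freeExponents hn hr, sum_image (injOn_colPivot hn r)]
  refine sum_congr rfl fun c hc => ?_
  rw [hpivot _ (by omega), hreflect r hr,
    rowPivot_sub_colPivot hn (mem_iff_lt_rowLen.2 (mem_range.1 hc))]
end

section
/- Purely combinatorially: for a partition λ of n with parts l_1 ≤ … ≤ l_n, and setting a_i = 2n - l_i - i, the multiset ⋃_{i=1}^n { j - a_i : a_i < j ≤ 2n-1, j ∉ {a_k : k < i} } coincides with the multiset of hook lengths {h_λ(u) : u ∈ λ}. -/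
/-- For a partition `μ` of `n` with weakly increasing parts `l 0 ≤ … ≤ l (n-1)`
(padded by zeros) and `a i = 2n - l i - (i+1)`, the multiset
`⋃_i {j - a i : a i < j ≤ 2n - 1, j ∉ {a k : k < i}}` coincides with the multiset of
hook lengths of `μ`. -/
theorem stmt9 (n : ℕ) (μ : YoungDiagram) (hμ : μ.card = n)
    (l a : ℕ → ℕ) (hl : ∀ i < n, l i = μ.rowLen (n - 1 - i))
    (ha : ∀ i < n, a i = 2 * n - l i - (i + 1)) :
    ((Finset.range n).val.bind fun i =>
      (((Finset.Ioc (a i) (2 * n - 1)).filter (fun j => ∀ k < i, j ≠ a k)).val.map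
        fun j => j - a i)) =
    μ.cells.val.map (hookLength μ) := by
  classical
  set B : ℕ → ℕ := fun r => μ.rowLen r + (n - 1 - r) with hB
  -- basic bounds
  have hrow_le : ∀ r, μ.rowLen r ≤ n := by
    intro r
    calc μ.rowLen r ≤ μ.rowLen 0 := μ.rowLen_anti 0 r (Nat.zero_le r)
      _ = (μ.row 0).card := μ.rowLen_eq_card
      _ ≤ μ.cells.card := Finset.card_le_card (Finset.filter_subset _ _)
      _ = n := hμ
  have hcol_le : ∀ c, μ.colLen c ≤ n := by
    intro c
    calc μ.colLen c ≤ μ.colLen 0 := μ.colLen_anti 0 c (Nat.zero_le c)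
      _ = (μ.col 0).card := μ.colLen_eq_card
      _ ≤ μ.cells.card := Finset.card_le_card (Finset.filter_subset _ _)
      _ = n := hμ
  have hBanti : ∀ r1 r2, r1 < r2 → r2 < n → B r2 < B r1 := by
    intro r1 r2 h12 h2n
    have := μ.rowLen_anti r1 r2 (le_of_lt h12)
    simp only [hB]
    omega
  have hBle : ∀ r, r < n → B r ≤ 2 * n - 1 := by
    intro r hr
    have := hrow_le r
    simp only [hB]
    omega
  have hcolpos : ∀ r c, c < μ.rowLen r → r < μ.colLen c := by
    intro r c hc
    exact YoungDiagram.mem_iff_lt_colLen.1 (YoungDiagram.mem_iff_lt_rowLen.2 hc)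
  have hmono : ∀ r c1 c2, c1 < c2 → c2 < μ.rowLen r →
      hookLength μ (r, c2) < hookLength μ (r, c1) := by
    intro r c1 c2 h12 h2
    have h3 := μ.colLen_anti c1 c2 (le_of_lt h12)
    have h4 := hcolpos r c2 h2
    simp only [hookLength]
    omega
  -- the key per-row identity, as finsets
  have key : ∀ r, r < n →
      ((Finset.Ioc 0 (B r)).filter (fun m => ∀ r', r < r' → r' < n → m ≠ B r - B r')) =
      (Finset.range (μ.rowLen r)).image (fun c => hookLength μ (r, c)) := by
    intro r hr
    set I := Finset.Ioc 0 (B r) with hI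
    set Bs := (Finset.Ioo r n).image (fun r' => B r - B r') with hBs
    set H := (Finset.range (μ.rowLen r)).image (fun c => hookLength μ (r, c)) with hH
    have hHsub : H ⊆ I \ Bs := by
      intro x hx
      simp only [hH, Finset.mem_image, Finset.mem_range] at hx
      obtain ⟨c, hc, rfl⟩ := hx
      have h1 := hcolpos r c hc
      have h2 := hcol_le c
      rw [Finset.mem_sdiff]
      constructor
      · simp only [hI, Finset.mem_Ioc, hookLength, hB]
        omega
      · simp only [hBs, Finset.mem_image, Finset.mem_Ioo, not_exists]
        rintro r' ⟨⟨hr1, hr2⟩, heq⟩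
        have h3 : c < μ.rowLen r' ↔ r' < μ.colLen c := by
          rw [← YoungDiagram.mem_iff_lt_rowLen, YoungDiagram.mem_iff_lt_colLen]
        have h4 := μ.rowLen_anti r r' (le_of_lt hr1)
        have h5 := hrow_le r'
        simp only [hookLength, hB] at heq
        omega
    have hBscard : Bs.card = n - r - 1 := by
      rw [hBs, Finset.card_image_of_injOn, Nat.card_Ioo]
      intro x hx y hy hxy
      simp only [Finset.coe_Ioo, Set.mem_Ioo] at hx hy
      have hxy' : B r - B x = B r - B y := hxy
      by_contra hne
      have hx2 := hBanti r x hx.1 hx.2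
      have hy2 := hBanti r y hy.1 hy.2
      rcases lt_or_gt_of_ne hne with h | h
      · have := hBanti x y h hy.2; omega
      · have := hBanti y x h hx.2; omega
    have hHcard : H.card = μ.rowLen r := by
      rw [hH, Finset.card_image_of_injOn, Finset.card_range]
      intro x hx y hy hxy
      simp only [Finset.coe_range, Set.mem_Iio] at hx hy
      have hxy' : hookLength μ (r, x) = hookLength μ (r, y) := hxy
      by_contra hne
      rcases lt_or_gt_of_ne hne with h | h
      · have := hmono r x y h hy; omega
      · have := hmono r y x h hx; omega
    have hBsub : Bs ⊆ I := by
      intro x hx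
      simp only [hBs, Finset.mem_image, Finset.mem_Ioo] at hx
      obtain ⟨r', ⟨h1, h2⟩, rfl⟩ := hx
      have := hBanti r r' h1 h2
      simp only [hI, Finset.mem_Ioc]
      omega
    have hIcard : I.card = B r := by simp [hI]
    have hsd : H = I \ Bs := by
      apply Finset.eq_of_subset_of_card_le hHsub
      rw [Finset.card_sdiff_of_subset hBsub, hIcard, hBscard, hHcard]
      simp only [hB]
      omega
    rw [hsd]
    ext m
    simp only [Finset.mem_filter, Finset.mem_sdiff, hBs, Finset.mem_image, Finset.mem_Ioo,
      not_exists]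
    constructor
    · rintro ⟨h1, h2⟩
      refine ⟨h1, ?_⟩
      rintro r' ⟨⟨ha1, ha2⟩, he⟩
      exact h2 r' ha1 ha2 he.symm
    · rintro ⟨h1, h2⟩
      refine ⟨h1, ?_⟩
      intro r' ha1 ha2 he
      exact h2 r' ⟨⟨ha1, ha2⟩, he.symm⟩
  -- per-index computation of the LHS summand
  have hstep : ∀ i, i < n →
      (((Finset.Ioc (a i) (2 * n - 1)).filter (fun j => ∀ k < i, j ≠ a k)).val.map
        fun j => j - a i) =
      (Multiset.range (μ.rowLen (n - 1 - i))).map (fun c => hookLength μ (n - 1 - i, c)) := by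
    intro i hi
    set r := n - 1 - i with hr
    have hrn : r < n := by omega
    have hai : a i = 2 * n - 1 - B r := by
      rw [ha i hi, hl i hi, ← hr]
      have := hrow_le r
      simp only [hB]
      omega
    have hak : ∀ k, k < i → a k = 2 * n - 1 - B (n - 1 - k) := by
      intro k hk
      rw [ha k (by omega), hl k (by omega)]
      have := hrow_le (n - 1 - k)
      simp only [hB]
      omega
    have hIoc : Finset.Ioc (a i) (2 * n - 1) =
        (Finset.Ioc 0 (B r)).map (addRightEmbedding (a i)) := by
      rw [Finset.map_add_right_Ioc, zero_add]
      have := hBle r hrn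
      congr 1
      omega
    rw [hIoc, Finset.filter_map, Finset.map_val, Multiset.map_map]
    have hcomp : ((fun j => j - a i) ∘ (addRightEmbedding (a i) : ℕ ↪ ℕ)) = id := by
      funext m
      simp [addRightEmbedding]
    rw [hcomp, Multiset.map_id]
    have hfc : (Finset.Ioc 0 (B r)).filter
          ((fun j => ∀ k < i, j ≠ a k) ∘ (addRightEmbedding (a i) : ℕ ↪ ℕ)) =
        (Finset.Ioc 0 (B r)).filter (fun m => ∀ r', r < r' → r' < n → m ≠ B r - B r') := by
      apply Finset.filter_congr
      intro m _
      simp only [Function.comp, addRightEmbedding, Function.Embedding.coeFn_mk]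
      constructor
      · intro h r' h1 h2 he
        have hk : n - 1 - r' < i := by omega
        have h3 := hak (n - 1 - r') hk
        have h4 : n - 1 - (n - 1 - r') = r' := by omega
        rw [h4] at h3
        have h5 := hBanti r r' h1 h2
        have h6 := hBle r hrn
        exact h (n - 1 - r') hk (by omega)
      · intro h k hk he
        have h1 : r < n - 1 - k := by omega
        have h2 : n - 1 - k < n := by omega
        have h3 := hak k hk
        have h5 := hBanti r (n - 1 - k) h1 h2
        have h6 := hBle r hrn
        have h7 := hBle (n - 1 - k) h2
        exact h (n - 1 - k) h1 h2 (by omega)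
    rw [hfc, key r hrn, Finset.image_val,
      Multiset.dedup_eq_self.2, ← Finset.range_val]
    refine Multiset.Nodup.map_on ?_ (Finset.range n |>.nodup |> fun _ => Multiset.nodup_range _)
    intro x hx y hy hxy
    rw [Finset.mem_val, Finset.mem_range] at hx hy
    by_contra hne
    rcases lt_or_gt_of_ne hne with h | h
    · have := hmono r x y h hy; omega
    · have := hmono r y x h hx; omega
  -- decompose the cells of μ into rows
  have hdisj : (↑(Finset.range n) : Set ℕ).PairwiseDisjoint μ.row := by
    intro x _ y _ hxy
    simp only [Finset.disjoint_left]
    intro c hcx hcy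
    rw [YoungDiagram.mem_row_iff] at hcx hcy
    exact hxy (hcx.2 ▸ hcy.2 ▸ rfl)
  have hcells : μ.cells = (Finset.range n).disjiUnion μ.row hdisj := by
    ext c
    simp only [Finset.mem_disjiUnion, Finset.mem_range, YoungDiagram.mem_row_iff,
      YoungDiagram.mem_cells]
    constructor
    · intro hc
      refine ⟨c.1, ?_, hc, rfl⟩
      have h1 : (c.1, 0) ∈ μ := μ.up_left_mem le_rfl (Nat.zero_le c.2) (by simpa using hc)
      have h2 := YoungDiagram.mem_iff_lt_colLen.1 h1
      have := hcol_le 0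
      omega
    · rintro ⟨r, _, hc, _⟩
      exact hc
  have hrowmap : ∀ r, (μ.row r).val.map (hookLength μ) =
      (Multiset.range (μ.rowLen r)).map (fun c => hookLength μ (r, c)) := by
    intro r
    rw [YoungDiagram.row_eq_prod, Finset.singleton_product, Finset.map_val, Multiset.map_map,
      Finset.range_val]
    rfl
  -- permutation i ↦ n - 1 - i of range n
  have hperm : (Multiset.range n).map (fun i => n - 1 - i) = Multiset.range n := by
    have h1 : ((Multiset.range n).map (fun i => n - 1 - i)).Nodup := by
      refine Multiset.Nodup.map_on ?_ (Multiset.nodup_range n)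
      intro x hx y hy hxy
      rw [Multiset.mem_range] at hx hy
      omega
    apply Multiset.eq_of_le_of_card_le
    · rw [Multiset.le_iff_subset h1]
      intro x hx
      rw [Multiset.mem_map] at hx
      obtain ⟨i, hi, rfl⟩ := hx
      rw [Multiset.mem_range] at hi ⊢
      omega
    · simp
  -- put everything together
  have hG : ((Finset.range n).val.bind fun i =>
      (((Finset.Ioc (a i) (2 * n - 1)).filter (fun j => ∀ k < i, j ≠ a k)).val.map
        fun j => j - a i)) =
      (Multiset.range n).bind
        (fun r => (Multiset.range (μ.rowLen r)).map (fun c => hookLength μ (r, c))) := by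
    rw [Finset.range_val]
    rw [Multiset.bind_congr (g := fun i =>
      (Multiset.range (μ.rowLen (n - 1 - i))).map (fun c => hookLength μ (n - 1 - i, c)))]
    · conv_rhs => rw [← hperm]
      rw [Multiset.bind_map]
    · intro i hi
      exact hstep i (Multiset.mem_range.1 hi)
  rw [hG, hcells, Finset.disjiUnion_val, Multiset.map_bind, Finset.range_val]
  exact Multiset.bind_congr (fun r _ => (hrowmap r).symm)
end
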